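/- arXiv:1902.02244 — 8 statements merged into one kernel-verified Lean document; each statement's English description precedes it below -/
import Mathlib

section
/- For K = 3 classes, there exists a positive real number γ and a finite sequence of labeled examples (x_1,y_1),…,(x_T,y_T) in ℝ² with labels in {1,2,3} that is weakly linearly separable with margin γ, but is not strongly linearly separable with margin γ' for any γ' > 0. -/
open scoped RealInnerProductSpace
open Finset

/-- Labeled examples are weakly linearly separable with margin `γ`. -/
def WeaklySeparable {V : Type*} [NormedAddCommGroup V] [InnerProductSpace ℝ V]
    {T K : ℕ} (x : Fin T → V) (y : Fin T → Fin K) (γ : ℝ) : Prop :=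
  ∃ w : Fin K → V, (∑ i, ‖w i‖ ^ 2 ≤ 1) ∧
    ∀ t : Fin T, ∀ i : Fin K, i ≠ y t → ⟪x t, w (y t)⟫ ≥ ⟪x t, w i⟫ + γ

/-- Labeled examples are strongly linearly separable with margin `γ`. -/
def StronglySeparable {V : Type*} [NormedAddCommGroup V] [InnerProductSpace ℝ V]
    {T K : ℕ} (x : Fin T → V) (y : Fin T → Fin K) (γ : ℝ) : Prop :=
  ∃ w : Fin K → V, (∑ i, ‖w i‖ ^ 2 ≤ 1) ∧
    (∀ t : Fin T, ⟪x t, w (y t)⟫ ≥ γ / 2) ∧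
    ∀ t : Fin T, ∀ i : Fin K, i ≠ y t → ⟪x t, w i⟫ ≤ -(γ / 2)

/-!
Strong separability with a positive margin fails as soon as some example lies in the convex hull
of examples carrying other labels: the classifier `w (y t)` of its label must be `≤ -γ/2` on
all of them, hence on their convex hull, yet `≥ γ/2` at `x t`. The points `(-2, 1)`, `(0, 1)`,
`(2, 1)` in three distinct classes are of this kind, the middle point being the midpoint of the
other two, but they are weakly separated with margin `1/2` by `w = ((-1/2, -1/2), 0, (1/2, -1/2))`.
-/

theorem not_stronglySeparable_of_mem_convexHull {V : Type*} [NormedAddCommGroup V]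
    [InnerProductSpace ℝ V] {T K : ℕ} {x : Fin T → V} {y : Fin T → Fin K} {γ : ℝ} (hγ : 0 < γ)
    {t : Fin T} (ht : x t ∈ convexHull ℝ (x '' {s | y s ≠ y t})) :
    ¬ StronglySeparable x y γ := by
  rintro ⟨w, -, hpos, hneg⟩
  have hconvex : Convex ℝ {v : V | ⟪v, w (y t)⟫ ≤ -(γ / 2)} :=
    convex_halfSpace_le ⟨fun u v => inner_add_left u v _, fun c v => real_inner_smul_left v _ c⟩ _
  have hxt : ⟪x t, w (y t)⟫ ≤ -(γ / 2) :=
    convexHull_min (by rintro _ ⟨s, hs, rfl⟩; exact hneg s (y t) (Ne.symm hs)) hconvex ht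
  linarith [hpos t]

def collinearTriple : Fin 3 → EuclideanSpace ℝ (Fin 2) := ![!₂[-2, 1], !₂[0, 1], !₂[2, 1]]

theorem collinearTriple_one_eq_midpoint :
    collinearTriple 1 = midpoint ℝ (collinearTriple 0) (collinearTriple 2) := by
  ext i
  fin_cases i <;> norm_num [collinearTriple, midpoint_eq_smul_add, Matrix.cons_val_two]

theorem weaklySeparable_collinearTriple : WeaklySeparable collinearTriple id (1 / 2) := by
  refine ⟨![!₂[-1/2, -1/2], !₂[0, 0], !₂[1/2, -1/2]], ?_, ?_⟩
  · simp only [← real_inner_self_eq_norm_sq, Fin.sum_univ_three, PiLp.inner_apply,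
      Fin.sum_univ_two, RCLike.inner_apply, conj_trivial]
    norm_num [Matrix.cons_val_two]
  · intro t i hi
    fin_cases t <;> fin_cases i <;>
      simp_all [collinearTriple, PiLp.inner_apply, Fin.sum_univ_two] <;> norm_num

theorem collinearTriple_one_mem_convexHull :
    collinearTriple 1 ∈ convexHull ℝ (collinearTriple '' {s | s ≠ 1}) := by
  rw [collinearTriple_one_eq_midpoint]
  exact (convex_convexHull ℝ _).midpoint_mem
    (subset_convexHull ℝ _ ⟨0, by decide, rfl⟩) (subset_convexHull ℝ _ ⟨2, by decide, rfl⟩)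

/-- For `K = 3` classes there is a positive margin `γ` and a finite sequence of labeled
examples in `ℝ²` that is weakly linearly separable with margin `γ` but is not strongly
linearly separable with any positive margin. -/
theorem exists_weakly_not_strongly_separable :
    ∃ (γ : ℝ), 0 < γ ∧ ∃ (T : ℕ) (x : Fin T → EuclideanSpace ℝ (Fin 2)) (y : Fin T → Fin 3),
      WeaklySeparable x y γ ∧ ∀ γ' : ℝ, 0 < γ' → ¬ StronglySeparable x y γ' :=
  ⟨1 / 2, by norm_num, 3, collinearTriple, id, weaklySeparable_collinearTriple,
    fun _ hγ' => not_stronglySeparable_of_mem_convexHull hγ' collinearTriple_one_mem_convexHull⟩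
end

section
/- Mistake bound for the Multiclass Perceptron: Let (x_1,y_1),…,(x_T,y_T) be labeled examples in an inner product space V with labels in {1,…,K} that are weakly linearly separable with margin γ > 0 and satisfy ‖x_t‖ ≤ R for all t. Define weight vectors w_1^{(1)} = … = w_K^{(1)} = 0, and suppose that at each round t a prediction ŷ_t ∈ {1,…,K} is chosen so that ⟨w_{ŷ_t}^{(t)}, x_t⟩ ≥ ⟨w_i^{(t)}, x_t⟩ for all i ∈ {1,…,K}; if ŷ_t ≠ y_t then w_{y_t}^{(t+1)} = w_{y_t}^{(t)} + x_t, w_{ŷ_t}^{(t+1)} = w_{ŷ_t}^{(t)} − x_t, and w_i^{(t+1)} = w_i^{(t)} for all other i; if ŷ_t = y_t then w_i^{(t+1)} = w_i^{(t)} for all i. Then the number of rounds t with ŷ_t ≠ y_t is at most ⌊2(R/γ)²⌋. -/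
open scoped RealInnerProductSpace
open Finset

theorem Fin.sum_univ_telescope {G : Type*} [AddCommGroup G] {T : ℕ} (f : ℕ → G) :
    ∑ t : Fin T, (f (t + 1) - f t) = f T - f 0 := by
  rw [Fin.sum_univ_eq_sum_range (fun t => f (t + 1) - f t), sum_range_sub]

section Telescope

variable {T : ℕ} (p : Fin T → Prop) [DecidablePred p] {f : ℕ → ℝ} {c : ℝ}

theorem card_filter_mul_le_sub_of_le_sub
    (h : ∀ t : Fin T, (if p t then c else 0) ≤ f (t + 1) - f t) :
    #{t | p t} * c ≤ f T - f 0 := by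
  rw [← nsmul_eq_mul, ← sum_const, sum_filter, ← Fin.sum_univ_telescope]
  exact sum_le_sum fun t _ => h t

theorem sub_le_card_filter_mul_of_sub_le
    (h : ∀ t : Fin T, f (t + 1) - f t ≤ if p t then c else 0) :
    f T - f 0 ≤ #{t | p t} * c := by
  rw [← nsmul_eq_mul, ← sum_const, sum_filter, ← Fin.sum_univ_telescope]
  exact sum_le_sum fun t _ => h t

end Telescope

theorem novikoff_card_filter_mul_sq_le {E : Type*} [NormedAddCommGroup E] [InnerProductSpace ℝ E]
    {T : ℕ} (p : Fin T → Prop) [DecidablePred p] (W : ℕ → E) (z : Fin T → E) (U : E) {γ c : ℝ}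
    (hγ : 0 ≤ γ) (hc : 0 ≤ c) (hW0 : W 0 = 0)
    (hupdate : ∀ t, p t → W (t + 1) = W t + z t) (hkeep : ∀ t, ¬p t → W (t + 1) = W t)
    (hdescent : ∀ t, p t → ⟪W t, z t⟫ ≤ 0) (hz : ∀ t, p t → ‖z t‖ ^ 2 ≤ c)
    (hmargin : ∀ t, p t → γ ≤ ⟪U, z t⟫) :
    #{t | p t} * γ ^ 2 ≤ ‖U‖ ^ 2 * c := by
  set m : ℝ := ((#{t | p t} : ℕ) : ℝ)
  have hcorrelation : m * γ ≤ ⟪U, W T⟫ := by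
    have h := card_filter_mul_le_sub_of_le_sub p (f := fun s => ⟪U, W s⟫) (c := γ) fun t => by
      split_ifs with ht
      · rw [hupdate t ht, inner_add_right]; linarith [hmargin t ht]
      · rw [hkeep t ht, sub_self]
    simpa only [hW0, inner_zero_right, sub_zero] using h
  have hnorm : ‖W T‖ ^ 2 ≤ m * c := by
    have h := sub_le_card_filter_mul_of_sub_le p (f := fun s => ‖W s‖ ^ 2) (c := c) fun t => by
      split_ifs with ht
      · rw [hupdate t ht, norm_add_sq_real]; linarith [hdescent t ht, hz t ht]
      · rw [hkeep t ht, sub_self]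
    simpa only [hW0, norm_zero, ne_eq, OfNat.ofNat_ne_zero, not_false_eq_true, zero_pow,
      sub_zero] using h
  have hm : 0 ≤ m := Nat.cast_nonneg _
  have hsq : (m * γ) ^ 2 ≤ ‖U‖ ^ 2 * (m * c) := calc
    (m * γ) ^ 2 ≤ (‖U‖ * ‖W T‖) ^ 2 :=
      pow_le_pow_left₀ (by positivity) (hcorrelation.trans (real_inner_le_norm _ _)) 2
    _ = ‖U‖ ^ 2 * ‖W T‖ ^ 2 := mul_pow _ _ _
    _ ≤ ‖U‖ ^ 2 * (m * c) := by gcongr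
  rcases hm.eq_or_lt with hm0 | hmpos
  · rw [← hm0, zero_mul]; positivity
  · exact le_of_mul_le_mul_left (by linear_combination hsq) hmpos

theorem eq_add_single_sub_single {ι M : Type*} [DecidableEq ι] [AddCommGroup M]
    {v v' : ι → M} {a b : ι} (hab : a ≠ b) {x : M}
    (ha : v' a = v a + x) (hb : v' b = v b - x) (hother : ∀ i, i ≠ a → i ≠ b → v' i = v i) :
    v' = v + (Pi.single a x - Pi.single b x) := by
  funext i
  by_cases hia : i = a
  · subst hia; simp [ha, hab]
  by_cases hib : i = b
  · subst hib; simp [hb, hia, sub_eq_add_neg]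
  simp [hother i hia hib, hia, hib]

section Kesler

variable {ι V : Type*} [Fintype ι] [DecidableEq ι] [NormedAddCommGroup V]

theorem inner_toLp_single_sub_single [InnerProductSpace ℝ V] (v : ι → V) (a b : ι) (x : V) :
    ⟪WithLp.toLp 2 v, WithLp.toLp 2 (Pi.single a x - Pi.single b x)⟫ = ⟪v a, x⟫ - ⟪v b, x⟫ := by
  simp [PiLp.inner_apply, inner_sub_right, apply_ite]

theorem norm_toLp_single_sub_single_sq {a b : ι} (hab : a ≠ b) (x : V) :
    ‖WithLp.toLp 2 (Pi.single a x - Pi.single b x : ι → V)‖ ^ 2 = 2 * ‖x‖ ^ 2 := by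
  rw [PiLp.norm_sq_eq_of_L2, Fintype.sum_eq_add a b hab]
  · simp [hab, hab.symm, two_mul]
  · rintro i ⟨hia, hib⟩
    simp [hia, hib]

end Kesler

theorem multiclass_perceptron_mistake_bound_general
    {V : Type*} [NormedAddCommGroup V] [InnerProductSpace ℝ V]
    {T K : ℕ} (γ R : ℝ) (hγ : 0 < γ)
    (x : Fin T → V) (y : Fin T → Fin K)
    (hsep : WeaklySeparable x y γ)
    (hx : ∀ t, ‖x t‖ ≤ R)
    (w : ℕ → Fin K → V) (yhat : Fin T → Fin K)
    (hw0 : ∀ i, w 0 i = 0)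
    (hpred : ∀ t : Fin T, ∀ i : Fin K, ⟪w t.val (yhat t), x t⟫ ≥ ⟪w t.val i, x t⟫)
    (hupd_mistake : ∀ t : Fin T, yhat t ≠ y t →
      w (t.val + 1) (y t) = w t.val (y t) + x t ∧
      w (t.val + 1) (yhat t) = w t.val (yhat t) - x t ∧
      ∀ i : Fin K, i ≠ y t → i ≠ yhat t → w (t.val + 1) i = w t.val i)
    (hupd_correct : ∀ t : Fin T, yhat t = y t → ∀ i : Fin K, w (t.val + 1) i = w t.val i) :
    (Finset.univ.filter fun t : Fin T => yhat t ≠ y t).card ≤ ⌊2 * (R / γ) ^ 2⌋₊ := by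
  obtain ⟨u, hu, hmargin⟩ := hsep
  have hU : ‖WithLp.toLp 2 u‖ ^ 2 ≤ 1 := by rwa [PiLp.norm_sq_eq_of_L2]
  have hbound := novikoff_card_filter_mul_sq_le (fun t => yhat t ≠ y t)
    (fun s => WithLp.toLp 2 (w s))
    (fun t => WithLp.toLp 2 (Pi.single (y t) (x t) - Pi.single (yhat t) (x t)))
    (WithLp.toLp 2 u) hγ.le (by positivity : 0 ≤ 2 * R ^ 2)
    (by ext i; simp [hw0])
    (fun t ht => by
      obtain ⟨hy, hyhat, hother⟩ := hupd_mistake t ht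
      rw [eq_add_single_sub_single (Ne.symm ht) hy hyhat hother, WithLp.toLp_add])
    (fun t ht => by simp only [funext (hupd_correct t (not_not.mp ht))])
    (fun t _ => by rw [inner_toLp_single_sub_single]; linarith [hpred t (y t)])
    (fun t ht => by
      rw [norm_toLp_single_sub_single_sq (Ne.symm ht)]
      gcongr; exact hx t)
    (fun t ht => by
      rw [inner_toLp_single_sub_single, real_inner_comm, real_inner_comm (x t)]
      linarith [hmargin t (yhat t) ht])
  have hmistakes := hbound.trans (mul_le_of_le_one_left (by positivity) hU)
  apply Nat.le_floor
  rwa [div_pow, ← mul_div_assoc, le_div_iff₀ (by positivity)]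

/-- Mistake bound for the Multiclass Perceptron: if the examples are weakly linearly
separable with margin `γ > 0` and all have norm at most `R`, then the Multiclass Perceptron
makes at most `⌊2(R/γ)²⌋` mistakes. The run of the algorithm is described by the weight
vectors `w u i` (the weight vector of class `i` before round `u`, here `u` ranges over `ℕ`)
and the predictions `yhat t`. -/
theorem multiclass_perceptron_mistake_bound
    {V : Type*} [NormedAddCommGroup V] [InnerProductSpace ℝ V]
    {T K : ℕ} (γ R : ℝ) (hγ : 0 < γ) (hR : 0 ≤ R)
    (x : Fin T → V) (y : Fin T → Fin K)
    (hsep : WeaklySeparable x y γ)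
    (hx : ∀ t, ‖x t‖ ≤ R)
    (w : ℕ → Fin K → V) (yhat : Fin T → Fin K)
    (hw0 : ∀ i, w 0 i = 0)
    (hpred : ∀ t : Fin T, ∀ i : Fin K, ⟪w t.val (yhat t), x t⟫ ≥ ⟪w t.val i, x t⟫)
    (hupd_mistake : ∀ t : Fin T, yhat t ≠ y t →
      w (t.val + 1) (y t) = w t.val (y t) + x t ∧
      w (t.val + 1) (yhat t) = w t.val (yhat t) - x t ∧
      ∀ i : Fin K, i ≠ y t → i ≠ yhat t → w (t.val + 1) i = w t.val i)
    (hupd_correct : ∀ t : Fin T, yhat t = y t → ∀ i : Fin K, w (t.val + 1) i = w t.val i) :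
    (Finset.univ.filter fun t : Fin T => yhat t ≠ y t).card ≤ ⌊2 * (R / γ) ^ 2⌋₊ :=
  multiclass_perceptron_mistake_bound_general γ R hγ x y hsep hx w yhat hw0 hpred hupd_mistake
    hupd_correct
end

section
/- Mistake lower bound for deterministic algorithms in online multiclass classification: Let K ≥ 2 be an integer, γ > 0, and R ≥ γ. For any deterministic prediction rule A, i.e., any function that maps a finite history ((x_1,y_1),…,(x_{t−1},y_{t−1})) of labeled examples together with a current feature vector x_t to a prediction ŷ_t ∈ {1,…,K}, there exist a positive integer T and a sequence of labeled examples (x_1,y_1),…,(x_T,y_T) in ℝ^T (with the standard inner product) that is weakly linearly separable with margin γ, satisfies ‖x_t‖ ≤ R for all t, and on which the number of rounds t with A((x_1,y_1),…,(x_{t−1},y_{t−1}), x_t) ≠ y_t is at least (1/2)·⌊(R/γ)²⌋. -/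
open scoped RealInnerProductSpace
open Finset

theorem exists_seq_forall_ne_pred {β : Type*} [Nontrivial β] (pred : ∀ n, (Fin n → β) → β) :
    ∃ y : ℕ → β, ∀ n, y n ≠ pred n fun s => y s := by
  choose other h_other using fun b : β => exists_ne b
  refine ⟨Nat.strongRec fun n prev => other (pred n fun s => prev s s.isLt), fun n => ?_⟩
  dsimp only
  rw [Nat.strongRec_eq]
  exact h_other _

theorem exists_fin_forall_ne_pred {β : Type*} [Nontrivial β] {T : ℕ}
    (pred : ∀ t : Fin T, (Fin t → β) → β) :
    ∃ y : Fin T → β, ∀ t, y t ≠ pred t fun s => y (Fin.castLT s (s.isLt.trans t.isLt)) := by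
  obtain ⟨y, hy⟩ := exists_seq_forall_ne_pred fun n prev =>
    if hn : n < T then pred ⟨n, hn⟩ prev else Classical.arbitrary β
  refine ⟨fun t => y t, fun t => ?_⟩
  have := hy t
  rwa [dif_pos t.isLt] at this

theorem weaklySeparable_smul_orthonormal {V : Type*} [NormedAddCommGroup V]
    [InnerProductSpace ℝ V] {T K : ℕ} {e : Fin T → V} (he : Orthonormal ℝ e) (y : Fin T → Fin K)
    {γ R : ℝ} (hR : 0 < R) (hT : T * γ ^ 2 ≤ R ^ 2) :
    WeaklySeparable (fun t => R • e t) y γ := by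
  set coef : Fin K → Fin T → ℝ := fun i t => if y t = i then γ / R else 0
  have h_inner (t : Fin T) (i : Fin K) :
      ⟪R • e t, ∑ s, coef i s • e s⟫ = if y t = i then γ else 0 := by
    rw [real_inner_smul_left, he.inner_right_sum _ (mem_univ t)]
    split_ifs <;> simp [coef, *, mul_div_cancel₀ _ hR.ne']
  refine ⟨fun i => ∑ t, coef i t • e t, ?_, fun t i hi => ?_⟩
  · calc ∑ i, ‖∑ t, coef i t • e t‖ ^ 2
        = ∑ t, ∑ i, if y t = i then (γ / R) ^ 2 else 0 := by
          simp_rw [← real_inner_self_eq_norm_sq, he.inner_sum]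
          rw [sum_comm]
          simp [coef, sq]
      _ = T * γ ^ 2 / R ^ 2 := by simp [div_pow, mul_div_assoc]
      _ ≤ 1 := (div_le_one (by positivity)).2 hT
  · rw [h_inner, h_inner, if_pos rfl, if_neg hi.symm]
    linarith

/-- Mistake lower bound for deterministic algorithms in online multiclass classification.
A deterministic prediction rule is a function `A` that, in every Euclidean space `ℝ^T`,
maps a finite history of labeled examples together with a current feature vector to a
predicted class in `{1,…,K}`. For any such rule there is a weakly linearly separable
sequence of examples (with margin `γ`, norms at most `R`) on which the rule makes at
least `(1/2)⌊(R/γ)²⌋` mistakes. -/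
theorem deterministic_mistake_lower_bound
    (K : ℕ) (hK : 2 ≤ K) (γ R : ℝ) (hγ : 0 < γ) (hR : γ ≤ R)
    (A : ∀ T : ℕ, List (EuclideanSpace ℝ (Fin T) × Fin K) →
          EuclideanSpace ℝ (Fin T) → Fin K) :
    ∃ (T : ℕ) (_ : 0 < T) (x : Fin T → EuclideanSpace ℝ (Fin T)) (y : Fin T → Fin K),
      WeaklySeparable x y γ ∧ (∀ t, ‖x t‖ ≤ R) ∧
      (1 / 2 : ℝ) * (⌊(R / γ) ^ 2⌋₊ : ℝ) ≤
        ((Finset.univ.filter fun t : Fin T =>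
            A T (List.ofFn fun s : Fin t.val =>
                  (x ⟨s.val, s.isLt.trans t.isLt⟩, y ⟨s.val, s.isLt.trans t.isLt⟩))
              (x t) ≠ y t).card : ℝ) := by
  have : Nontrivial (Fin K) := Fin.nontrivial_iff_two_le.2 hK
  set T := ⌊(R / γ) ^ 2⌋₊
  have hR_pos : 0 < R := hγ.trans_le hR
  have hT_pos : 0 < T := Nat.floor_pos.2 (one_le_pow₀ ((one_le_div hγ).2 hR))
  have hT : T * γ ^ 2 ≤ R ^ 2 :=
    calc (T : ℝ) * γ ^ 2 ≤ (R / γ) ^ 2 * γ ^ 2 := by gcongr; exact Nat.floor_le (by positivity)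
      _ = R ^ 2 := by field_simp
  set e := EuclideanSpace.basisFun (Fin T) ℝ
  set x : Fin T → EuclideanSpace ℝ (Fin T) := fun t => R • e t
  obtain ⟨y, hy⟩ := exists_fin_forall_ne_pred fun t prev =>
    A T (List.ofFn fun s : Fin t => (x (Fin.castLT s (s.isLt.trans t.isLt)), prev s)) (x t)
  refine ⟨T, hT_pos, x, y, weaklySeparable_smul_orthonormal e.orthonormal y hR_pos hT,
    fun t => ?_, ?_⟩
  · simp [x, norm_smul, e.orthonormal.1 t, abs_of_pos hR_pos]
  · rw [filter_true_of_mem fun t _ => ?_, card_univ, Fintype.card_fin]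
    · linarith [(Nat.cast_nonneg T : (0 : ℝ) ≤ T)]
    · exact (hy t).symm
end

section
/- Update bound underlying Theorem 4.1: Let (x_1,y_1),…,(x_T,y_T) be labeled examples in an inner product space V with labels in {1,…,K} that are strongly linearly separable with margin γ > 0 and satisfy ‖x_t‖ ≤ R for all t. Consider any sequence of K-tuples of weight vectors starting from W^{(0)} = (0,…,0) where the (u+1)-st tuple W^{(u+1)} is obtained from W^{(u)} by selecting a round index t_u ∈ {1,…,T} and a class j_u ∈ {1,…,K} such that either (i) j_u = y_{t_u} and ⟨W_{j_u}^{(u)}, x_{t_u}⟩ < 0, in which case W_{j_u}^{(u+1)} = W_{j_u}^{(u)} + x_{t_u}, or (ii) j_u ≠ y_{t_u} and ⟨W_{j_u}^{(u)}, x_{t_u}⟩ ≥ 0, in which case W_{j_u}^{(u+1)} = W_{j_u}^{(u)} − x_{t_u}, and all other coordinates are unchanged. Then the number U of such updates satisfies U ≤ 4(R/γ)². -/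
open scoped RealInnerProductSpace
open Finset

/-- Update bound for the bandit algorithm for strongly linearly separable examples:
starting from the all-zero `K`-tuple of weight vectors, any sequence of `U` updates, each
performed on some example `x_{t_u}` and class `j_u` with either a positive update
(`j_u = y_{t_u}` and the current inner product is negative) or a negative update
(`j_u ≠ y_{t_u}` and the current inner product is nonnegative), satisfies `U ≤ 4(R/γ)²`. -/
theorem update_bound_strongly_separable
    {V : Type*} [NormedAddCommGroup V] [InnerProductSpace ℝ V]
    {T K : ℕ} (γ R : ℝ) (hγ : 0 < γ) (hR : 0 ≤ R)
    (x : Fin T → V) (y : Fin T → Fin K)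
    (hsep : StronglySeparable x y γ)
    (hx : ∀ t, ‖x t‖ ≤ R)
    (U : ℕ) (W : ℕ → Fin K → V) (tsel : Fin U → Fin T) (jsel : Fin U → Fin K)
    (hW0 : ∀ i, W 0 i = 0)
    (hupd : ∀ u : Fin U,
      ((jsel u = y (tsel u) ∧ ⟪W u.val (jsel u), x (tsel u)⟫ < 0 ∧
          W (u.val + 1) (jsel u) = W u.val (jsel u) + x (tsel u)) ∨
        (jsel u ≠ y (tsel u) ∧ ⟪W u.val (jsel u), x (tsel u)⟫ ≥ 0 ∧
          W (u.val + 1) (jsel u) = W u.val (jsel u) - x (tsel u))))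
    (hunch : ∀ u : Fin U, ∀ i : Fin K, i ≠ jsel u → W (u.val + 1) i = W u.val i) :
    (U : ℝ) ≤ 4 * (R / γ) ^ 2 := by
  obtain ⟨w, hw1, hwpos, hwneg⟩ := hsep
  have hA : ∀ n ≤ U, (n : ℝ) * (γ / 2) ≤ ∑ i, ⟪W n i, w i⟫ := by
    intro n hn
    induction n with
    | zero => simp [hW0]
    | succ n ih =>
      have hnU : n < U := hn
      have ih' := ih (le_of_lt hnU)
      have hdiff : ∑ i, (⟪W (n+1) i, w i⟫ - ⟪W n i, w i⟫)
          = ⟪W (n+1) (jsel ⟨n, hnU⟩), w (jsel ⟨n, hnU⟩)⟫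
            - ⟪W n (jsel ⟨n, hnU⟩), w (jsel ⟨n, hnU⟩)⟫ := by
        refine Finset.sum_eq_single_of_mem _ (Finset.mem_univ _) ?_
        intro i _ hi
        have := hunch ⟨n, hnU⟩ i hi
        simp only [Fin.val_mk] at this
        rw [this]; ring
      have hstep : γ / 2 ≤ ⟪W (n+1) (jsel ⟨n, hnU⟩), w (jsel ⟨n, hnU⟩)⟫
          - ⟪W n (jsel ⟨n, hnU⟩), w (jsel ⟨n, hnU⟩)⟫ := by
        rcases hupd ⟨n, hnU⟩ with ⟨heq, _, hWn⟩ | ⟨hne, _, hWn⟩ <;>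
          simp only [Fin.val_mk] at hWn
        · rw [hWn, inner_add_left]
          have h1 := hwpos (tsel ⟨n, hnU⟩)
          rw [heq]; linarith
        · rw [hWn, inner_sub_left]
          have h1 := hwneg (tsel ⟨n, hnU⟩) (jsel ⟨n, hnU⟩) hne
          linarith
      have hsum : ∑ i, ⟪W (n+1) i, w i⟫ - ∑ i, ⟪W n i, w i⟫
          = ⟪W (n+1) (jsel ⟨n, hnU⟩), w (jsel ⟨n, hnU⟩)⟫
            - ⟪W n (jsel ⟨n, hnU⟩), w (jsel ⟨n, hnU⟩)⟫ := by
        rw [← Finset.sum_sub_distrib, hdiff]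
      push_cast
      linarith
  have hB : ∀ n ≤ U, ∑ i, ‖W n i‖ ^ 2 ≤ (n : ℝ) * R ^ 2 := by
    intro n hn
    induction n with
    | zero => simp [hW0]
    | succ n ih =>
      have hnU : n < U := hn
      have ih' := ih (le_of_lt hnU)
      have hdiff : ∑ i, (‖W (n+1) i‖ ^ 2 - ‖W n i‖ ^ 2)
          = ‖W (n+1) (jsel ⟨n, hnU⟩)‖ ^ 2 - ‖W n (jsel ⟨n, hnU⟩)‖ ^ 2 := by
        refine Finset.sum_eq_single_of_mem _ (Finset.mem_univ _) ?_
        intro i _ hi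
        have := hunch ⟨n, hnU⟩ i hi
        simp only [Fin.val_mk] at this
        rw [this]; ring
      have hxR : ‖x (tsel ⟨n, hnU⟩)‖ ^ 2 ≤ R ^ 2 := by
        have := hx (tsel ⟨n, hnU⟩)
        nlinarith [norm_nonneg (x (tsel ⟨n, hnU⟩))]
      have hstep : ‖W (n+1) (jsel ⟨n, hnU⟩)‖ ^ 2 - ‖W n (jsel ⟨n, hnU⟩)‖ ^ 2 ≤ R ^ 2 := by
        rcases hupd ⟨n, hnU⟩ with ⟨_, h2, hWn⟩ | ⟨_, h2, hWn⟩ <;>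
          simp only [Fin.val_mk] at hWn h2
        · rw [hWn, @norm_add_sq_real]
          linarith
        · rw [hWn, @norm_sub_sq_real]
          linarith
      have hsum : ∑ i, ‖W (n+1) i‖ ^ 2 - ∑ i, ‖W n i‖ ^ 2
          = ‖W (n+1) (jsel ⟨n, hnU⟩)‖ ^ 2 - ‖W n (jsel ⟨n, hnU⟩)‖ ^ 2 := by
        rw [← Finset.sum_sub_distrib, hdiff]
      push_cast
      linarith
  have hAU := hA U le_rfl
  have hBU := hB U le_rfl
  have hw0 : (0 : ℝ) ≤ ∑ i, ‖w i‖ ^ 2 := by positivity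
  have hWU0 : (0 : ℝ) ≤ ∑ i, ‖W U i‖ ^ 2 := by positivity
  have hCS : (∑ i, ⟪W U i, w i⟫) ^ 2 ≤ (∑ i, ‖W U i‖ ^ 2) * (∑ i, ‖w i‖ ^ 2) := by
    have h1 : ∑ i, ⟪W U i, w i⟫ ≤ ∑ i, ‖W U i‖ * ‖w i‖ :=
      Finset.sum_le_sum fun i _ => real_inner_le_norm _ _
    have h2 := Finset.sum_mul_sq_le_sq_mul_sq Finset.univ (fun i => ‖W U i‖) (fun i => ‖w i‖)
    have h0 : 0 ≤ ∑ i, ⟪W U i, w i⟫ := le_trans (by positivity) hAU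
    nlinarith
  have key : ((U : ℝ) * (γ / 2)) ^ 2 ≤ (U : ℝ) * R ^ 2 := by
    have h0 : 0 ≤ ∑ i, ⟪W U i, w i⟫ := le_trans (by positivity) hAU
    have h3 : (∑ i, ‖W U i‖ ^ 2) * (∑ i, ‖w i‖ ^ 2) ≤ ((U : ℝ) * R ^ 2) * 1 :=
      mul_le_mul hBU hw1 hw0 (by positivity)
    have h4 : ((U : ℝ) * (γ / 2)) ^ 2 ≤ (∑ i, ⟪W U i, w i⟫) ^ 2 :=
      pow_le_pow_left₀ (by positivity) hAU 2
    nlinarith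
  rcases Nat.eq_zero_or_pos U with h | h
  · simp [h]; positivity
  · have hU : (0 : ℝ) < U := by exact_mod_cast h
    have hUγ : (U : ℝ) * γ ^ 2 ≤ 4 * R ^ 2 := by nlinarith
    have heq : 4 * (R / γ) ^ 2 = 4 * R ^ 2 / γ ^ 2 := by field_simp
    rw [heq, le_div_iff₀ (by positivity)]
    linarith
end

section
/- Polynomial approximation of an intersection of halfspaces I: Let v_1,…,v_m ∈ ℝ^d satisfy ‖v_i‖ ≤ 1 for all i, and let γ ∈ (0,1). Then there exists a multivariate polynomial p : ℝ^d → ℝ such that (1) p(x) ≥ 1/2 for all x in R⁺ = ∩_{i=1}^m {x ∈ ℝ^d : ‖x‖ ≤ 1, ⟨v_i,x⟩ ≥ γ}; (2) p(x) ≤ −1/2 for all x in R⁻ = ∪_{i=1}^m {x ∈ ℝ^d : ‖x‖ ≤ 1, ⟨v_i,x⟩ ≤ −γ}; (3) deg(p) ≤ ⌈log₂(2m)⌉·⌈√(1/γ)⌉; and (4) ‖p‖ ≤ [188·⌈log₂(2m)⌉·⌈√(1/γ)⌉]^{(⌈log₂(2m)⌉·⌈√(1/γ)⌉)/2}. -/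
/-!
With `K = ⌈√(1/γ)⌉` and `L = ⌈log₂ 2m⌉`, take `p(x) = 1 - ∑ᵢ W(⟪vᵢ, x⟫) ^ L`, where
`W(t) = T_K(b - a t) / 2` for the Chebyshev polynomial `T_K` and an affine map with `a + b = 3`
sending `[γ, 1]` into `[-1, 1]` and `-γ` to `1 + 4γ / (1 + γ)`. On `R⁺` every `|W(⟪vᵢ, x⟫)|` is at
most `1/2`, so the sum is at most `m 2⁻ᴸ ≤ 1/2`. On `R⁻` some `⟪vᵢ, x⟫ ≤ -γ`, and since
`T_K(y) ≥ 1 + K²(y - 1)` for `y ≥ 1` that summand is at least `2ᴸ ≥ 2m`, while all others are at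
least `-2⁻ᴸ`.

For the coefficient norm, the `ℓ¹` norm of univariate coefficients is submultiplicative, which
bounds that of `W ^ L` by `7ᴷᴸ / 2ᴸ`, and by the multinomial theorem `⟪w, x⟫ ^ k` has coefficient
norm at most `√(k!) ‖w‖ᵏ`.
-/

open scoped RealInnerProductSpace
open Finset

/-- The norm of a multivariate polynomial: the Euclidean norm of its coefficient vector. -/
noncomputable def polyNorm {d : ℕ} (p : MvPolynomial (Fin d) ℝ) : ℝ :=
  Real.sqrt (∑ α ∈ p.support, (p.coeff α) ^ 2)

open scoped Nat

namespace Polynomial.Chebyshev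

theorem T_natCast_add_two (R : Type*) [CommRing R] (n : ℕ) :
    T R ((n + 2 : ℕ) : ℤ) = 2 * X * T R ((n + 1 : ℕ) : ℤ) - T R n := by
  push_cast
  exact T_add_two R n

/-- The increments `T (n + 1) x - T n x` grow by `2 (x - 1) T (n + 1) x ≥ 2 (x - 1)` at each
step. -/
theorem one_add_sq_mul_sub_one_le_eval_T_real {x : ℝ} (hx : 1 ≤ x) (n : ℕ) :
    1 + n ^ 2 * (x - 1) ≤ (T ℝ n).eval x := by
  suffices h : ∀ n : ℕ, 1 + n ^ 2 * (x - 1) ≤ (T ℝ n).eval x ∧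
      (T ℝ n).eval x + (2 * n + 1) * (x - 1) ≤ (T ℝ ((n + 1 : ℕ) : ℤ)).eval x from (h n).1
  intro n
  induction n with
  | zero => simp [T_one]
  | succ n ih =>
    obtain ⟨h₀, h₁⟩ := ih
    have h₂ := one_le_eval_T_real ((n + 1 : ℕ) : ℤ) hx
    rw [T_natCast_add_two, eval_sub, eval_mul, eval_mul, eval_X, eval_ofNat]
    push_cast at *
    constructor <;> nlinarith

theorem neg_one_le_eval_T_real {x : ℝ} (hx : -1 ≤ x) (n : ℤ) : -1 ≤ (T ℝ n).eval x := by
  rcases le_or_gt x 1 with h | h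
  · exact (abs_le.1 (abs_eval_T_real_le_one n (abs_le.2 ⟨hx, h⟩))).1
  · linarith [one_le_eval_T_real n h.le]

end Polynomial.Chebyshev

namespace Polynomial

section L1Norm

variable {R : Type*}

noncomputable def l1Norm [SeminormedRing R] (p : R[X]) : ℝ := p.sum fun _ a => ‖a‖

section SeminormedRing

variable [SeminormedRing R]

theorem l1Norm_eq_sum_of_support_subset {p : R[X]} {s : Finset ℕ} (hs : p.support ⊆ s) :
    l1Norm p = ∑ k ∈ s, ‖p.coeff k‖ :=
  sum_eq_of_subset _ (fun _ => norm_zero) hs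

theorem l1Norm_nonneg (p : R[X]) : 0 ≤ l1Norm p := sum_nonneg fun _ _ => norm_nonneg _

@[simp]
theorem l1Norm_monomial (n : ℕ) (a : R) : l1Norm (monomial n a) = ‖a‖ :=
  sum_monomial_index a _ norm_zero

@[simp]
theorem l1Norm_C (a : R) : l1Norm (C a) = ‖a‖ := l1Norm_monomial 0 a

@[simp]
theorem l1Norm_neg (p : R[X]) : l1Norm (-p) = l1Norm p := by
  simp [l1Norm, sum_def, support_neg]

theorem l1Norm_add_le (p q : R[X]) : l1Norm (p + q) ≤ l1Norm p + l1Norm q := by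
  classical
  rw [l1Norm_eq_sum_of_support_subset support_add,
    l1Norm_eq_sum_of_support_subset (subset_union_left (s₂ := q.support)),
    l1Norm_eq_sum_of_support_subset (subset_union_right (s₁ := p.support)), ← sum_add_distrib]
  exact sum_le_sum fun k _ => (coeff_add p q k).symm ▸ norm_add_le _ _

theorem l1Norm_sub_le (p q : R[X]) : l1Norm (p - q) ≤ l1Norm p + l1Norm q := by
  simpa [sub_eq_add_neg] using l1Norm_add_le p (-q)

theorem l1Norm_sum_le {ι : Type*} (s : Finset ι) (f : ι → R[X]) :
    l1Norm (∑ i ∈ s, f i) ≤ ∑ i ∈ s, l1Norm (f i) :=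
  Finset.le_sum_of_subadditive _ (by simp [l1Norm]) l1Norm_add_le s f

theorem l1Norm_mul_le (p q : R[X]) : l1Norm (p * q) ≤ l1Norm p * l1Norm q := by
  rw [mul_eq_sum_sum]
  refine (l1Norm_sum_le _ _).trans ?_
  rw [l1Norm, sum_def, sum_mul]
  refine sum_le_sum fun i _ => (l1Norm_sum_le _ _).trans ?_
  rw [l1Norm, sum_def, mul_sum]
  exact sum_le_sum fun j _ => (l1Norm_monomial _ _).trans_le (norm_mul_le _ _)

theorem l1Norm_two_mul_le (p : R[X]) : l1Norm (2 * p) ≤ 2 * l1Norm p := by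
  simpa [two_mul] using l1Norm_add_le p p

variable [NormOneClass R]

@[simp]
theorem l1Norm_one : l1Norm (1 : R[X]) = 1 := by simpa using l1Norm_C (1 : R)

@[simp]
theorem l1Norm_X : l1Norm (X : R[X]) = 1 := by
  rw [← monomial_one_one_eq_X, l1Norm_monomial, norm_one]

theorem l1Norm_pow_le (p : R[X]) (n : ℕ) : l1Norm (p ^ n) ≤ l1Norm p ^ n := by
  induction n with
  | zero => simp
  | succ n ih =>
    rw [pow_succ, pow_succ]
    exact (l1Norm_mul_le _ _).trans (mul_le_mul_of_nonneg_right ih (l1Norm_nonneg p))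

end SeminormedRing

theorem Chebyshev.l1Norm_T_comp_le [SeminormedCommRing R] [NormOneClass R] (g : R[X]) (n : ℕ) :
    l1Norm ((Chebyshev.T R n).comp g) ≤ (2 * l1Norm g + 1) ^ n := by
  have hg := l1Norm_nonneg g
  induction n using Nat.twoStepInduction with
  | zero => simp
  | one => simp; linarith
  | more n ih₀ ih₁ =>
    rw [Chebyshev.T_natCast_add_two, sub_comp, mul_comp, mul_comp, X_comp, ofNat_comp]
    calc _ ≤ l1Norm (2 * g * (Chebyshev.T R ((n + 1 : ℕ) : ℤ)).comp g) +
          l1Norm ((Chebyshev.T R n).comp g) := l1Norm_sub_le _ _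
      _ ≤ 2 * l1Norm g * (2 * l1Norm g + 1) ^ (n + 1) + (2 * l1Norm g + 1) ^ n := by
        gcongr
        exact (l1Norm_mul_le _ _).trans
          (mul_le_mul (l1Norm_two_mul_le g) ih₁ (l1Norm_nonneg _) (by positivity))
      _ ≤ (2 * l1Norm g + 1) ^ (n + 2) := by
        have := pow_nonneg (by linarith : (0 : ℝ) ≤ 2 * l1Norm g + 1) n
        rw [pow_succ, pow_succ, pow_succ]
        nlinarith [mul_nonneg this hg]

end L1Norm

end Polynomial

theorem Nat.multinomial_le_factorial_sum {α : Type*} (s : Finset α) (f : α → ℕ) :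
    Nat.multinomial s f ≤ (∑ i ∈ s, f i)! :=
  Nat.multinomial_spec s f ▸ Nat.le_mul_of_pos_left _ (prod_pos fun _ _ => Nat.factorial_pos _)

section PolyNorm

open MvPolynomial

variable {d : ℕ}

theorem polyNorm_eq_sum_of_support_subset {p : MvPolynomial (Fin d) ℝ} {S : Finset (Fin d →₀ ℕ)}
    (h : p.support ⊆ S) : polyNorm p = √(∑ α ∈ S, p.coeff α ^ 2) := by
  rw [polyNorm, sum_subset h fun α _ hα => by rw [notMem_support_iff.1 hα, sq, zero_mul]]

theorem polyNorm_eq_norm_coeff {p : MvPolynomial (Fin d) ℝ} {S : Finset (Fin d →₀ ℕ)}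
    (h : p.support ⊆ S) :
    polyNorm p = ‖(WithLp.toLp 2 fun α : S => p.coeff α : EuclideanSpace ℝ S)‖ := by
  rw [polyNorm_eq_sum_of_support_subset h, EuclideanSpace.norm_eq, ← sum_coe_sort S]
  simp

theorem polyNorm_add_le (p q : MvPolynomial (Fin d) ℝ) :
    polyNorm (p + q) ≤ polyNorm p + polyNorm q := by
  classical
  set S := p.support ∪ q.support
  rw [polyNorm_eq_norm_coeff (support_add : (p + q).support ⊆ S),
    polyNorm_eq_norm_coeff (subset_union_left : p.support ⊆ S),
    polyNorm_eq_norm_coeff (subset_union_right : q.support ⊆ S)]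
  calc _ = ‖(WithLp.toLp 2 fun α : S => p.coeff α) + WithLp.toLp 2 fun α : S => q.coeff α‖ := by
        rw [← WithLp.toLp_add]
        simp only [coeff_add]
        rfl
    _ ≤ _ := norm_add_le _ _

theorem polyNorm_sum_le {ι : Type*} (s : Finset ι) (f : ι → MvPolynomial (Fin d) ℝ) :
    polyNorm (∑ i ∈ s, f i) ≤ ∑ i ∈ s, polyNorm (f i) :=
  Finset.le_sum_of_subadditive _ (by simp [polyNorm]) polyNorm_add_le s f

@[simp]
theorem polyNorm_neg (p : MvPolynomial (Fin d) ℝ) : polyNorm (-p) = polyNorm p := by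
  simp [polyNorm, support_neg]

theorem polyNorm_sub_le (p q : MvPolynomial (Fin d) ℝ) :
    polyNorm (p - q) ≤ polyNorm p + polyNorm q := by
  simpa [sub_eq_add_neg] using polyNorm_add_le p (-q)

theorem polyNorm_smul (c : ℝ) (p : MvPolynomial (Fin d) ℝ) :
    polyNorm (c • p) = |c| * polyNorm p := by
  rw [polyNorm_eq_sum_of_support_subset support_smul, polyNorm, ← Real.sqrt_sq_eq_abs,
    ← Real.sqrt_mul (sq_nonneg c), mul_sum]
  simp [mul_pow]

@[simp]
theorem polyNorm_C (c : ℝ) : polyNorm (C c : MvPolynomial (Fin d) ℝ) = |c| := by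
  rw [C_apply, polyNorm_eq_sum_of_support_subset support_monomial_subset]
  simp [Real.sqrt_sq_eq_abs]

@[simp]
theorem polyNorm_one : polyNorm (1 : MvPolynomial (Fin d) ℝ) = 1 := by
  simpa using polyNorm_C (d := d) 1

theorem polyNorm_sum_monomial {ι : Type*} {s : Finset ι} {e : ι → Fin d →₀ ℕ} (he : Set.InjOn e s)
    (c : ι → ℝ) : polyNorm (∑ i ∈ s, monomial (e i) (c i)) = √(∑ i ∈ s, c i ^ 2) := by
  classical
  rw [polyNorm_eq_sum_of_support_subset (S := s.image e), sum_image he]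
  · refine congrArg _ (sum_congr rfl fun i hi => ?_)
    rw [coeff_sum, sum_eq_single_of_mem i hi fun j hj hji => ?_, coeff_monomial, if_pos rfl]
    rw [coeff_monomial, if_neg fun h => hji (he hj hi h)]
  · refine support_sum.trans (biUnion_subset.2 fun i hi => ?_)
    exact (support_monomial_subset).trans (singleton_subset_iff.2 (mem_image_of_mem e hi))

end PolyNorm

section LinearForm

open MvPolynomial

variable {d : ℕ}

noncomputable def linearForm (w : EuclideanSpace ℝ (Fin d)) : MvPolynomial (Fin d) ℝ :=
  ∑ j, C (w j) * X j

theorem eval_linearForm (w x : EuclideanSpace ℝ (Fin d)) :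
    eval (fun j => x j) (linearForm w) = ⟪w, x⟫ := by
  simp [linearForm, PiLp.inner_apply, mul_comm]

theorem totalDegree_linearForm_le (w : EuclideanSpace ℝ (Fin d)) :
    (linearForm w).totalDegree ≤ 1 :=
  (totalDegree_finsetSum _ _).trans <| Finset.sup_le fun j _ =>
    (totalDegree_mul _ _).trans (by simp)

theorem linearForm_pow (w : EuclideanSpace ℝ (Fin d)) (k : ℕ) :
    linearForm w ^ k = ∑ α ∈ univ.piAntidiag k,
      monomial (Finsupp.equivFunOnFinite.symm α) (Nat.multinomial univ α * ∏ j, w j ^ α j) := by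
  rw [linearForm, sum_pow_eq_sum_piAntidiag]
  refine sum_congr rfl fun α _ => ?_
  rw [← C_mul_monomial, monomial_eq, Finsupp.prod_fintype _ _ fun _ => pow_zero _]
  simp [mul_pow, prod_mul_distrib]

theorem polyNorm_linearForm_pow_le (w : EuclideanSpace ℝ (Fin d)) (k : ℕ) :
    polyNorm (linearForm w ^ k) ≤ √(k !) * ‖w‖ ^ k := by
  rw [linearForm_pow, polyNorm_sum_monomial (Finsupp.equivFunOnFinite.symm.injective.injOn),
    ← Real.sqrt_sq (by positivity : 0 ≤ ‖w‖ ^ k), ← Real.sqrt_mul (Nat.cast_nonneg _)]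
  refine Real.sqrt_le_sqrt ?_
  calc ∑ α ∈ univ.piAntidiag k, ((Nat.multinomial univ α : ℝ) * ∏ j, w j ^ α j) ^ 2
      ≤ ∑ α ∈ univ.piAntidiag k, k ! * (Nat.multinomial univ α * ∏ j, (w j ^ 2) ^ α j) := by
        refine sum_le_sum fun α hα => ?_
        have hM : (Nat.multinomial univ α : ℝ) ≤ k ! := by
          exact_mod_cast (mem_piAntidiag.1 hα).1 ▸ Nat.multinomial_le_factorial_sum univ α
        rw [mul_pow, ← prod_pow, sq (Nat.multinomial univ α : ℝ), ← mul_assoc]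
        simp_rw [← pow_mul, mul_comm _ 2, pow_mul]
        gcongr
      _ = k ! * (‖w‖ ^ k) ^ 2 := by
        rw [← mul_sum, ← sum_pow_eq_sum_piAntidiag, ← pow_mul, mul_comm k, pow_mul,
          EuclideanSpace.real_norm_sq_eq]

theorem totalDegree_aeval_le (ℓ : MvPolynomial (Fin d) ℝ) (Q : Polynomial ℝ) :
    (Polynomial.aeval ℓ Q).totalDegree ≤ Q.natDegree * ℓ.totalDegree := by
  rw [Polynomial.aeval_eq_sum_range]
  refine (totalDegree_finsetSum _ _).trans <| Finset.sup_le fun k hk => ?_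
  refine (totalDegree_smul_le _ _).trans <| (totalDegree_pow ℓ k).trans ?_
  exact Nat.mul_le_mul_right _ (Nat.lt_succ_iff.1 (mem_range.1 hk))

theorem polyNorm_aeval_linearForm_le {w : EuclideanSpace ℝ (Fin d)} (hw : ‖w‖ ≤ 1)
    (Q : Polynomial ℝ) :
    polyNorm (Polynomial.aeval (linearForm w) Q) ≤ √(Q.natDegree !) * Q.l1Norm := by
  rw [Polynomial.aeval_eq_sum_range,
    Polynomial.l1Norm_eq_sum_of_support_subset Polynomial.supp_subset_range_natDegree_succ,
    mul_sum]
  refine (polyNorm_sum_le _ _).trans <| sum_le_sum fun k hk => ?_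
  have hk : k ≤ Q.natDegree := Nat.lt_succ_iff.1 (mem_range.1 hk)
  calc polyNorm (Q.coeff k • linearForm w ^ k)
      = |Q.coeff k| * polyNorm (linearForm w ^ k) := polyNorm_smul _ _
    _ ≤ |Q.coeff k| * (√(k !) * ‖w‖ ^ k) := by gcongr; exact polyNorm_linearForm_pow_le w k
    _ ≤ |Q.coeff k| * √(Q.natDegree !) := by
        gcongr
        calc √(k !) * ‖w‖ ^ k ≤ √(k !) * 1 := by gcongr; exact pow_le_one₀ (norm_nonneg w) hw
          _ ≤ √(Q.natDegree !) := by rw [mul_one]; gcongr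
    _ = √(Q.natDegree !) * ‖Q.coeff k‖ := by rw [Real.norm_eq_abs, mul_comm]

end LinearForm

theorem neg_pow_le_pow_of_neg_le {c z : ℝ} (hc : 0 ≤ c) (h : -c ≤ z) (n : ℕ) : -c ^ n ≤ z ^ n := by
  rcases le_or_gt 0 z with hz | hz
  · linarith [pow_nonneg hz n, pow_nonneg hc n]
  · have : |z ^ n| ≤ c ^ n :=
      abs_pow z n ▸ pow_le_pow_left₀ (abs_nonneg z) (abs_le.2 ⟨h, by linarith⟩) n
    linarith [neg_abs_le (z ^ n)]

section Amplifier

open Polynomial Polynomial.Chebyshev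

noncomputable def marginAmplifier (γ : ℝ) (K : ℕ) : ℝ[X] :=
  C (1 / 2) * (T ℝ K).comp (C ((1 + 3 * γ) / (1 + γ)) - C (2 / (1 + γ)) * X)

variable {γ : ℝ} {K : ℕ}

theorem eval_marginAmplifier (t : ℝ) :
    (marginAmplifier γ K).eval t = (T ℝ K).eval ((1 + 3 * γ - 2 * t) / (1 + γ)) / 2 := by
  simp only [marginAmplifier, eval_mul, eval_C, eval_comp, eval_sub, eval_X]
  ring_nf

theorem abs_eval_marginAmplifier_le (hγ : 0 ≤ γ) {t : ℝ} (ht₀ : γ ≤ t) (ht₁ : t ≤ 1) :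
    |(marginAmplifier γ K).eval t| ≤ 1 / 2 := by
  rw [eval_marginAmplifier, abs_div, abs_two, div_le_div_iff_of_pos_right two_pos]
  refine abs_eval_T_real_le_one _ (abs_le.2 ⟨?_, ?_⟩)
  · rw [le_div_iff₀ (by positivity)]; linarith
  · rw [div_le_one (by positivity)]; linarith

theorem neg_half_le_eval_marginAmplifier (hγ : 0 ≤ γ) {t : ℝ} (ht : t ≤ 1) :
    -(1 / 2) ≤ (marginAmplifier γ K).eval t := by
  rw [eval_marginAmplifier]
  have := neg_one_le_eval_T_real (x := (1 + 3 * γ - 2 * t) / (1 + γ))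
    (by rw [le_div_iff₀ (by positivity)]; linarith) K
  linarith

theorem two_le_eval_marginAmplifier (hγ : 0 ≤ γ) (hK : 2 ≤ K) (hγK : 1 ≤ γ * K ^ 2) {t : ℝ}
    (ht : t ≤ -γ) : 2 ≤ (marginAmplifier γ K).eval t := by
  have hK3 : (3 : ℝ) ≤ K ^ 2 := by
    have : (2 : ℝ) ≤ K := by exact_mod_cast hK
    nlinarith
  set y := (1 + 3 * γ - 2 * t) / (1 + γ)
  have hy : 4 * γ ≤ (y - 1) * (1 + γ) := by
    rw [sub_mul, div_mul_cancel₀ _ (by positivity)]; linarith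
  have hT := one_add_sq_mul_sub_one_le_eval_T_real (x := y) (by nlinarith) K
  rw [eval_marginAmplifier]
  -- `T_K y ≥ 1 + K² (y - 1) ≥ 1 + 4 γ K² / (1 + γ) ≥ 4` as `γ K² ≥ 1` and `K² ≥ 3`
  nlinarith

theorem natDegree_marginAmplifier_le : (marginAmplifier γ K).natDegree ≤ K := by
  refine natDegree_C_mul_le _ _ |>.trans <| natDegree_comp_le.trans ?_
  rw [natDegree_T, Int.natAbs_natCast]
  calc K * natDegree (C ((1 + 3 * γ) / (1 + γ)) - C (2 / (1 + γ)) * X) ≤ K * 1 := by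
        gcongr; compute_degree
    _ = K := mul_one K

theorem natDegree_marginAmplifier_pow_le (L : ℕ) : (marginAmplifier γ K ^ L).natDegree ≤ L * K :=
  natDegree_pow_le.trans (Nat.mul_le_mul_left L natDegree_marginAmplifier_le)

theorem l1Norm_marginAmplifier_le (hγ : 0 ≤ γ) : (marginAmplifier γ K).l1Norm ≤ 7 ^ K / 2 := by
  set g : ℝ[X] := C ((1 + 3 * γ) / (1 + γ)) - C (2 / (1 + γ)) * X
  have hg : l1Norm g ≤ 3 := by
    refine (l1Norm_sub_le _ _).trans <| (add_le_add_right (l1Norm_mul_le _ _) _).trans ?_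
    rw [l1Norm_C, l1Norm_C, l1Norm_X, mul_one, Real.norm_of_nonneg (by positivity),
      Real.norm_of_nonneg (by positivity), ← add_div, div_le_iff₀ (by positivity)]
    linarith
  calc (marginAmplifier γ K).l1Norm ≤ ‖(1 / 2 : ℝ)‖ * (2 * l1Norm g + 1) ^ K := by
        refine (l1Norm_mul_le _ _).trans ?_
        rw [l1Norm_C]
        gcongr
        exact Chebyshev.l1Norm_T_comp_le g K
    _ ≤ ‖(1 / 2 : ℝ)‖ * (2 * 3 + 1) ^ K := by gcongr; linarith [l1Norm_nonneg g]
    _ = 7 ^ K / 2 := by norm_num; ring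

end Amplifier

theorem mul_one_half_pow_le_one_half {m : ℝ} {L : ℕ} (hL : 2 * m ≤ 2 ^ L) :
    m * (1 / 2) ^ L ≤ 1 / 2 := by
  rw [one_div_pow, mul_one_div, div_le_div_iff₀ (by positivity) two_pos]
  linarith

theorem MvPolynomial.eval_polynomial_aeval {σ R : Type*} [CommSemiring R] (f : σ → R)
    (ℓ : MvPolynomial σ R) (Q : Polynomial R) :
    eval f (Polynomial.aeval ℓ Q) = Q.eval (eval f ℓ) :=
  (Polynomial.aeval_algHom_apply (aeval f) ℓ Q).symm

section Construction

open MvPolynomial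

variable {d m : ℕ}

noncomputable def halfspaceApprox (v : Fin m → EuclideanSpace ℝ (Fin d)) (γ : ℝ) (K L : ℕ) :
    MvPolynomial (Fin d) ℝ :=
  1 - ∑ i, Polynomial.aeval (linearForm (v i)) (marginAmplifier γ K ^ L)

theorem eval_halfspaceApprox (v : Fin m → EuclideanSpace ℝ (Fin d)) (γ : ℝ) (K L : ℕ)
    (x : EuclideanSpace ℝ (Fin d)) :
    eval (fun j => x j) (halfspaceApprox v γ K L) =
      1 - ∑ i, (marginAmplifier γ K).eval ⟪v i, x⟫ ^ L := by
  simp only [halfspaceApprox, map_sub, map_one, map_sum, eval_polynomial_aeval, eval_linearForm,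
    Polynomial.eval_pow]

variable {v : Fin m → EuclideanSpace ℝ (Fin d)} {γ : ℝ} {K L : ℕ}

theorem half_le_eval_halfspaceApprox (hγ : 0 ≤ γ) (hL : 2 * (m : ℝ) ≤ 2 ^ L)
    {x : EuclideanSpace ℝ (Fin d)} (hx : ∀ i, γ ≤ ⟪v i, x⟫ ∧ ⟪v i, x⟫ ≤ 1) :
    1 / 2 ≤ eval (fun j => x j) (halfspaceApprox v γ K L) := by
  have hterm : ∀ i, (marginAmplifier γ K).eval ⟪v i, x⟫ ^ L ≤ (1 / 2 : ℝ) ^ L := fun i =>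
    (le_abs_self _).trans <| (abs_pow _ L).trans_le <|
      pow_le_pow_left₀ (abs_nonneg _) (abs_eval_marginAmplifier_le hγ (hx i).1 (hx i).2) L
  have hsum := sum_le_sum (s := univ) fun i _ => hterm i
  rw [sum_const, card_univ, Fintype.card_fin, nsmul_eq_mul] at hsum
  rw [eval_halfspaceApprox]
  linarith [mul_one_half_pow_le_one_half hL]

theorem eval_halfspaceApprox_le_neg_half (hγ : 0 ≤ γ) (hK : 2 ≤ K) (hγK : 1 ≤ γ * K ^ 2)
    (hL : 2 * (m : ℝ) ≤ 2 ^ L) {x : EuclideanSpace ℝ (Fin d)} (hx : ∀ i, ⟪v i, x⟫ ≤ 1)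
    (hxγ : ∃ i, ⟪v i, x⟫ ≤ -γ) :
    eval (fun j => x j) (halfspaceApprox v γ K L) ≤ -(1 / 2) := by
  obtain ⟨i₀, hi₀⟩ := hxγ
  rw [eval_halfspaceApprox]
  set f := fun i => (marginAmplifier γ K).eval ⟪v i, x⟫ ^ L
  have hbig : 2 ^ L ≤ f i₀ :=
    pow_le_pow_left₀ zero_le_two (two_le_eval_marginAmplifier hγ hK hγK hi₀) L
  have hsmall (i : Fin m) : 0 ≤ f i + (1 / 2) ^ L := by
    have := neg_pow_le_pow_of_neg_le one_half_pos.le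
      (neg_half_le_eval_marginAmplifier (K := K) hγ (hx i)) L
    linarith
  have hsum := single_le_sum (fun i _ => hsmall i) (mem_univ i₀)
  rw [sum_add_distrib, sum_const, card_univ, Fintype.card_fin, nsmul_eq_mul] at hsum
  have hm : (1 : ℝ) ≤ m := by exact_mod_cast Fin.pos i₀
  linarith [pow_pos (one_half_pos (α := ℝ)) L, mul_one_half_pow_le_one_half hL]

theorem totalDegree_halfspaceApprox_le (v : Fin m → EuclideanSpace ℝ (Fin d)) (γ : ℝ) (K L : ℕ) :
    (halfspaceApprox v γ K L).totalDegree ≤ L * K := by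
  have hW := natDegree_marginAmplifier_pow_le (γ := γ) (K := K) L
  refine (totalDegree_sub _ _).trans <| max_le (by simp) <|
    (totalDegree_finsetSum _ _).trans <| Finset.sup_le fun i _ => ?_
  calc _ ≤ (marginAmplifier γ K ^ L).natDegree * (linearForm (v i)).totalDegree :=
        totalDegree_aeval_le _ _
    _ ≤ L * K * 1 := Nat.mul_le_mul hW (totalDegree_linearForm_le _)
    _ = L * K := mul_one _

theorem polyNorm_halfspaceApprox_le (hv : ∀ i, ‖v i‖ ≤ 1) (hγ : 0 ≤ γ) :
    polyNorm (halfspaceApprox v γ K L) ≤ 1 + m * (1 / 2) ^ L * (√((L * K) !) * 7 ^ (L * K)) := by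
  have hW := natDegree_marginAmplifier_pow_le (γ := γ) (K := K) L
  have hterm (i : Fin m) :
      polyNorm (Polynomial.aeval (linearForm (v i)) (marginAmplifier γ K ^ L)) ≤
        (1 / 2) ^ L * (√((L * K) !) * 7 ^ (L * K)) :=
    calc _ ≤ √((marginAmplifier γ K ^ L).natDegree !) * (marginAmplifier γ K ^ L).l1Norm :=
          polyNorm_aeval_linearForm_le (hv i) _
      _ ≤ √((L * K) !) * (7 ^ K / 2) ^ L := by
          gcongr
          · exact Polynomial.l1Norm_nonneg _
          · exact (Polynomial.l1Norm_pow_le _ L).trans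
              (pow_le_pow_left₀ (Polynomial.l1Norm_nonneg _) (l1Norm_marginAmplifier_le hγ) L)
      _ = (1 / 2) ^ L * (√((L * K) !) * 7 ^ (L * K)) := by
          rw [div_eq_mul_one_div, mul_pow, ← pow_mul, mul_comm K L]
          ring
  rw [halfspaceApprox]
  calc _ ≤ polyNorm 1 +
          ∑ i, polyNorm (Polynomial.aeval (linearForm (v i)) (marginAmplifier γ K ^ L)) :=
        (polyNorm_sub_le _ _).trans (by gcongr; exact polyNorm_sum_le _ _)
    _ ≤ 1 + ∑ _i : Fin m, (1 / 2) ^ L * (√((L * K) !) * 7 ^ (L * K)) := by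
        rw [polyNorm_one]
        gcongr with i
        exact hterm i
    _ = 1 + m * (1 / 2) ^ L * (√((L * K) !) * 7 ^ (L * K)) := by
        rw [sum_const, card_univ, Fintype.card_fin, nsmul_eq_mul, mul_assoc]

end Construction

theorem two_mul_le_two_pow_ceil_logb (m : ℕ) : 2 * (m : ℝ) ≤ 2 ^ ⌈Real.logb 2 (2 * m)⌉₊ := by
  rcases Nat.eq_zero_or_pos m with rfl | hm
  · simp
  calc 2 * (m : ℝ) = 2 ^ Real.logb 2 (2 * m) :=
        (Real.rpow_logb two_pos (by norm_num) (by positivity)).symm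
    _ ≤ 2 ^ (⌈Real.logb 2 (2 * m)⌉₊ : ℝ) :=
        Real.rpow_le_rpow_of_exponent_le one_le_two (Nat.le_ceil _)
    _ = 2 ^ ⌈Real.logb 2 (2 * m)⌉₊ := Real.rpow_natCast 2 _

theorem one_le_mul_ceil_sqrt_inv_sq {γ : ℝ} (hγ : 0 < γ) : 1 ≤ γ * (⌈√(1 / γ)⌉₊ : ℝ) ^ 2 := by
  have h := pow_le_pow_left₀ (Real.sqrt_nonneg _) (Nat.le_ceil √(1 / γ)) 2
  rw [Real.sq_sqrt (by positivity)] at h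
  calc 1 = γ * (1 / γ) := (mul_one_div_cancel hγ.ne').symm
    _ ≤ γ * (⌈√(1 / γ)⌉₊ : ℝ) ^ 2 := by gcongr

theorem two_le_ceil_sqrt_inv {γ : ℝ} (hγ₀ : 0 < γ) (hγ₁ : γ < 1) : 2 ≤ ⌈√(1 / γ)⌉₊ := by
  rw [Nat.succ_le_iff, Nat.lt_ceil, Nat.cast_one, Real.lt_sqrt zero_le_one, one_pow,
    lt_one_div one_pos hγ₀, div_one]
  exact hγ₁

theorem one_add_sqrt_factorial_mul_le {n : ℕ} (hn : 1 ≤ n) :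
    1 + 1 / 2 * (√(n !) * 7 ^ n) ≤ (188 * n : ℝ) ^ ((n : ℝ) / 2) := by
  have hrpow : (188 * n : ℝ) ^ ((n : ℝ) / 2) = √188 ^ n * √n ^ n := by
    rw [← mul_pow, ← Real.sqrt_mul (by norm_num), Real.sqrt_eq_rpow, ← Real.rpow_natCast,
      ← Real.rpow_mul (by positivity), one_div_mul_eq_div]
  have h7 : 7 ≤ √188 := Real.le_sqrt_of_sq_le (by norm_num)
  have hfac : √(n !) ≤ √n ^ n := by
    rw [Real.sqrt_le_iff, ← pow_mul, mul_comm, pow_mul, Real.sq_sqrt (Nat.cast_nonneg n)]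
    exact ⟨by positivity, by exact_mod_cast Nat.factorial_le_pow n⟩
  have hr : 7 ^ n ≤ √188 ^ n := pow_le_pow_left₀ (by norm_num) h7 n
  have hr7 : (7 : ℝ) ≤ 7 ^ n := le_self_pow₀ (by norm_num) (by omega)
  have hs : 1 ≤ √n ^ n := one_le_pow₀ (Real.one_le_sqrt.2 (by exact_mod_cast hn))
  rw [hrpow]
  nlinarith [mul_le_mul hfac hr (by positivity) (by positivity)]

/-- Polynomial approximation of an intersection of halfspaces I: for unit vectors
`v_1,…,v_m` and margin `γ ∈ (0,1)` there is a multivariate polynomial that is `≥ 1/2` on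
the intersection `R⁺` of the `γ`-shifted halfspaces within the unit ball, `≤ -1/2` on the
union `R⁻` of the opposite `γ`-shifted halfspaces within the unit ball, has degree at most
`⌈log₂(2m)⌉·⌈√(1/γ)⌉` and norm at most `(188·⌈log₂(2m)⌉·⌈√(1/γ)⌉)^{⌈log₂(2m)⌉·⌈√(1/γ)⌉/2}`. -/
theorem poly_approx_halfspaces_I
    (d m : ℕ) (v : Fin m → EuclideanSpace ℝ (Fin d)) (hv : ∀ i, ‖v i‖ ≤ 1)
    (γ : ℝ) (hγ0 : 0 < γ) (hγ1 : γ < 1) :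
    ∃ p : MvPolynomial (Fin d) ℝ,
      (∀ x : EuclideanSpace ℝ (Fin d), ‖x‖ ≤ 1 → (∀ i, γ ≤ ⟪v i, x⟫) →
        (1 : ℝ) / 2 ≤ MvPolynomial.eval (fun j => x j) p) ∧
      (∀ x : EuclideanSpace ℝ (Fin d), ‖x‖ ≤ 1 → (∃ i, ⟪v i, x⟫ ≤ -γ) →
        MvPolynomial.eval (fun j => x j) p ≤ -(1 / 2 : ℝ)) ∧
      p.totalDegree ≤ ⌈Real.logb 2 (2 * m)⌉₊ * ⌈Real.sqrt (1 / γ)⌉₊ ∧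
      polyNorm p ≤
        (188 * ((⌈Real.logb 2 (2 * m)⌉₊ * ⌈Real.sqrt (1 / γ)⌉₊ : ℕ) : ℝ)) ^
          (((⌈Real.logb 2 (2 * m)⌉₊ * ⌈Real.sqrt (1 / γ)⌉₊ : ℕ) : ℝ) / 2) := by
  rcases Nat.eq_zero_or_pos m with rfl | hm
  · exact ⟨1, fun _ _ _ => by norm_num, fun _ _ ⟨i, _⟩ => i.elim0, by simp, by simp⟩
  have hL := two_mul_le_two_pow_ceil_logb m
  have hK := two_le_ceil_sqrt_inv hγ0 hγ1
  set L := ⌈Real.logb 2 (2 * m)⌉₊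
  set K := ⌈√(1 / γ)⌉₊
  have hinner (x : EuclideanSpace ℝ (Fin d)) (hx : ‖x‖ ≤ 1) (i : Fin m) : ⟪v i, x⟫ ≤ 1 :=
    (real_inner_le_norm _ _).trans (mul_le_one₀ (hv i) (norm_nonneg x) hx)
  refine ⟨halfspaceApprox v γ K L,
    fun x hx hxγ => half_le_eval_halfspaceApprox hγ0.le hL fun i => ⟨hxγ i, hinner x hx i⟩,
    fun x hx => eval_halfspaceApprox_le_neg_half hγ0.le hK (one_le_mul_ceil_sqrt_inv_sq hγ0) hL
      (hinner x hx),
    totalDegree_halfspaceApprox_le v γ K L, ?_⟩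
  have hL₁ : 1 ≤ L := Nat.one_le_iff_ne_zero.2 fun h => by
    rw [h, pow_zero] at hL
    linarith [(Nat.one_le_cast (α := ℝ)).2 hm]
  calc polyNorm (halfspaceApprox v γ K L)
      ≤ 1 + m * (1 / 2) ^ L * (√((L * K) !) * 7 ^ (L * K)) := polyNorm_halfspaceApprox_le hv hγ0.le
    _ ≤ 1 + 1 / 2 * (√((L * K) !) * 7 ^ (L * K)) := by
        gcongr 1 + ?_ * _
        exact mul_one_half_pow_le_one_half hL
    _ ≤ _ := by exact_mod_cast one_add_sqrt_factorial_mul_le (n := L * K) (by nlinarith)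
end

section
/- Norm of a product of polynomials: Let p_1,…,p_n be multivariate polynomials in d real variables and let p(x) = ∏_{j=1}^n p_j(x) be their product. Then ‖p‖² ≤ n^{Σ_{j=1}^n deg(p_j)} · ∏_{j=1}^n ‖p_j‖². -/
open Finset

/-!
Write the coefficient of `α` in `∏ pⱼ` as the sum of `∏ⱼ (pⱼ)_{kⱼ}` over the tuples `k` with
`kⱼ ∈ supp pⱼ` and `∑ kⱼ = α`. By Cauchy–Schwarz its square is at most the number of such tuples
times the sum of the squared terms. Transposing `k` turns such a tuple into, for each variable `i`,
a way of writing `αᵢ` as a sum of `n` naturals, so there are at most `n ^ |α| ≤ n ^ ∑ deg pⱼ` of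
them. Summing over `α`, every tuple `k` occurs at most once, and the sum over all tuples of
`∏ⱼ (pⱼ)_{kⱼ}²` factors as `∏ⱼ ‖pⱼ‖²`.
-/

theorem Nat.multichoose_le_pow : ∀ n k : ℕ, n.multichoose k ≤ n ^ k
  | n, 0 => by simp [Nat.multichoose_zero_right]
  | 0, k + 1 => by simp [Nat.multichoose_zero_succ]
  | n + 1, k + 1 => by
    have h₁ := Nat.multichoose_le_pow n (k + 1)
    have h₂ := Nat.multichoose_le_pow (n + 1) k
    have h₃ : n ^ (k + 1) ≤ n * (n + 1) ^ k := by
      rw [pow_succ']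
      gcongr
      omega
    rw [Nat.multichoose_succ_succ, pow_succ]
    nlinarith

namespace Finset

variable {ι σ : Type*} [DecidableEq ι]

theorem card_piAntidiag_nat_le (s : Finset ι) (k : ℕ) : #(piAntidiag s k) ≤ #s ^ k :=
  calc #(piAntidiag s k) = #(finsuppAntidiag s k) := by simp [finsuppAntidiag]
    _ = (#s).multichoose k := card_finsuppAntidiag_nat_eq_multichoose k
    _ ≤ #s ^ k := Nat.multichoose_le_pow _ _

theorem card_piAntidiag_finsupp_le [Fintype σ] [DecidableEq σ] (s : Finset ι) (α : σ →₀ ℕ) :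
    #(piAntidiag s α) ≤ #s ^ α.degree := by
  have hmaps : ∀ f ∈ piAntidiag s α,
      (fun i j => f j i) ∈ Fintype.piFinset fun i => piAntidiag s (α i) := by
    intro f hf
    rw [mem_piAntidiag] at hf
    simp only [Fintype.mem_piFinset, mem_piAntidiag]
    refine fun i => ⟨by simp [← hf.1, Finsupp.finsetSum_apply], fun j hj => hf.2 j ?_⟩
    contrapose! hj
    simp [hj]
  have hinj : Set.InjOn (fun (f : ι → σ →₀ ℕ) i j => f j i) (piAntidiag s α) :=
    fun f _ g _ h => funext fun j => Finsupp.ext fun i => congrFun (congrFun h i) j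
  calc #(piAntidiag s α)
      ≤ #(Fintype.piFinset fun i => piAntidiag s (α i)) := card_le_card_of_injOn _ hmaps hinj
    _ = ∏ i, #(piAntidiag s (α i)) := Fintype.card_piFinset _
    _ ≤ ∏ i, #s ^ α i := prod_le_prod' fun i _ => card_piAntidiag_nat_le s (α i)
    _ = #s ^ α.degree := by rw [prod_pow_eq_pow_sum, Finsupp.degree_eq_sum]

end Finset

namespace MvPolynomial

variable {ι σ R : Type*} [Fintype ι] [DecidableEq ι] [DecidableEq σ]

theorem coeff_prod_eq_sum_piFinset [CommSemiring R] (p : ι → MvPolynomial σ R) (α : σ →₀ ℕ) :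
    (∏ j, p j).coeff α =
      ∑ k ∈ Fintype.piFinset (fun j => (p j).support) with ∑ j, k j = α,
        ∏ j, (p j).coeff (k j) := by
  conv_lhs => rw [Finset.prod_congr rfl fun j _ => as_sum (p j), prod_univ_sum]
  simp only [← monomial_sum_prod, coeff_sum, coeff_monomial, sum_ite, sum_const_zero, add_zero]

theorem card_filter_piFinset_sum_eq_le [Fintype σ] [CommSemiring R] (p : ι → MvPolynomial σ R)
    {α : σ →₀ ℕ} (hα : α ∈ (∏ j, p j).support) :
    #{k ∈ Fintype.piFinset (fun j => (p j).support) | ∑ j, k j = α} ≤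
      Fintype.card ι ^ ∑ j, (p j).totalDegree :=
  calc #{k ∈ Fintype.piFinset (fun j => (p j).support) | ∑ j, k j = α}
      ≤ #(piAntidiag univ α) := card_le_card fun k hk => by simp [(mem_filter.1 hk).2]
    _ ≤ Fintype.card ι ^ α.degree := card_piAntidiag_finsupp_le _ _
    _ ≤ Fintype.card ι ^ ∑ j, (p j).totalDegree := by
      have hdeg : α.degree ≤ ∑ j, (p j).totalDegree :=
        (le_totalDegree hα).trans (totalDegree_finsetProd _ _)
      rcases isEmpty_or_nonempty ι
      · simp_all
      · exact Nat.pow_le_pow_right Fintype.card_pos hdeg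

theorem sum_sq_coeff_prod_le [Fintype σ] [CommRing R] [LinearOrder R] [IsStrictOrderedRing R]
    (p : ι → MvPolynomial σ R) :
    ∑ α ∈ (∏ j, p j).support, (∏ j, p j).coeff α ^ 2 ≤
      (Fintype.card ι : R) ^ (∑ j, (p j).totalDegree) *
        ∏ j, ∑ β ∈ (p j).support, (p j).coeff β ^ 2 := by
  set B := Fintype.piFinset fun j => (p j).support
  set c : (ι → σ →₀ ℕ) → R := fun k => ∏ j, (p j).coeff (k j)
  calc ∑ α ∈ (∏ j, p j).support, (∏ j, p j).coeff α ^ 2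
      = ∑ α ∈ (∏ j, p j).support, (∑ k ∈ B with ∑ j, k j = α, c k) ^ 2 := by
        simp only [coeff_prod_eq_sum_piFinset, B, c]
    _ ≤ ∑ α ∈ (∏ j, p j).support,
          (Fintype.card ι : R) ^ (∑ j, (p j).totalDegree) * ∑ k ∈ B with ∑ j, k j = α, c k ^ 2 := by
        refine sum_le_sum fun α hα => sq_sum_le_card_mul_sum_sq.trans ?_
        gcongr
        exact_mod_cast card_filter_piFinset_sum_eq_le p hα
    _ ≤ (Fintype.card ι : R) ^ (∑ j, (p j).totalDegree) * ∑ k ∈ B, c k ^ 2 := by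
        rw [← mul_sum]
        gcongr
        exact sum_fiberwise_le_sum_of_sum_fiber_nonneg fun _ _ => sum_nonneg fun _ _ => sq_nonneg _
    _ = (Fintype.card ι : R) ^ (∑ j, (p j).totalDegree) *
          ∏ j, ∑ β ∈ (p j).support, (p j).coeff β ^ 2 := by
        simp only [c, prod_univ_sum, B, prod_pow]

end MvPolynomial

theorem polyNorm_sq {d : ℕ} (p : MvPolynomial (Fin d) ℝ) :
    polyNorm p ^ 2 = ∑ α ∈ p.support, p.coeff α ^ 2 :=
  Real.sq_sqrt (sum_nonneg fun _ _ => sq_nonneg _)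

/-- Norm of a product of polynomials: for multivariate polynomials `p_1,…,p_n`,
`‖∏ p_j‖² ≤ n^{Σ deg(p_j)} · ∏ ‖p_j‖²`. -/
theorem polyNorm_prod_sq_le (d n : ℕ) (p : Fin n → MvPolynomial (Fin d) ℝ) :
    polyNorm (∏ j, p j) ^ 2 ≤
      (n : ℝ) ^ (∑ j, (p j).totalDegree) * ∏ j, polyNorm (p j) ^ 2 := by
  simpa only [polyNorm_sq, Fintype.card_fin] using MvPolynomial.sum_sq_coeff_prod_le p
end

section
/- Non-separation lemma: Let (x_1,y_1),…,(x_T,y_T) be labeled examples in an inner product space V with labels in {1,…,K} that are weakly linearly separable with margin γ > 0. If i, j ∈ {1,…,T} satisfy ‖x_i − x_j‖ ≤ γ, then y_i = y_j. -/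
open scoped RealInnerProductSpace
open Finset

/-- Non-separation lemma: if the examples are weakly linearly separable with margin
`γ > 0` and two feature vectors are within distance `γ` of each other, then they have
the same label. -/
theorem non_separation {V : Type*} [NormedAddCommGroup V] [InnerProductSpace ℝ V]
    {T K : ℕ} (x : Fin T → V) (y : Fin T → Fin K) (γ : ℝ) (hγ : 0 < γ)
    (hsep : WeaklySeparable x y γ)
    (i j : Fin T) (hij : ‖x i - x j‖ ≤ γ) : y i = y j := by
  by_contra hne
  obtain ⟨w, hw, hmar⟩ := hsep
  set a := w (y i)
  set b := w (y j)
  have h1 : ⟪x i, a⟫ ≥ ⟪x i, b⟫ + γ := hmar i (y j) (Ne.symm hne)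
  have h2 : ⟪x j, b⟫ ≥ ⟪x j, a⟫ + γ := hmar j (y i) hne
  have hsum : ⟪x i - x j, a - b⟫ ≥ 2 * γ := by
    rw [inner_sub_left, inner_sub_right, inner_sub_right]
    linarith
  have hcs : ⟪x i - x j, a - b⟫ ≤ ‖x i - x j‖ * ‖a - b‖ :=
    real_inner_le_norm _ _
  -- bound ‖a‖² + ‖b‖² ≤ 1
  have hab : ‖a‖ ^ 2 + ‖b‖ ^ 2 ≤ 1 := by
    have hsub : ({y i, y j} : Finset (Fin K)) ⊆ Finset.univ := Finset.subset_univ _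
    have hle : ∑ k ∈ ({y i, y j} : Finset (Fin K)), ‖w k‖ ^ 2 ≤ ∑ k, ‖w k‖ ^ 2 :=
      Finset.sum_le_sum_of_subset_of_nonneg hsub (by intros; positivity)
    rw [Finset.sum_pair hne] at hle
    linarith
  have hnab : ‖a - b‖ ^ 2 ≤ 2 := by
    have := norm_sub_sq_real a b
    have hin : ⟪a, b⟫ ≥ -(‖a‖ * ‖b‖) := neg_le_of_neg_le (by
      have := abs_real_inner_le_norm a b
      linarith [abs_le.mp this])
    nlinarith [sq_nonneg (‖a‖ - ‖b‖), sq_nonneg (‖a‖ + ‖b‖)]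
  have hnab' : ‖a - b‖ ≤ Real.sqrt 2 := by
    have := Real.sqrt_le_sqrt hnab
    rwa [Real.sqrt_sq (norm_nonneg _)] at this
  have hs2 : Real.sqrt 2 < 2 := by
    nlinarith [Real.sq_sqrt (by norm_num : (2:ℝ) ≥ 0), Real.sqrt_nonneg 2]
  have : ‖x i - x j‖ * ‖a - b‖ ≤ γ * Real.sqrt 2 :=
    mul_le_mul hij hnab' (norm_nonneg _) hγ.le
  nlinarith
end

section
/- Embedding lemma: Let γ ∈ (0, 1/160), let d ≥ 2 be an integer, and let N be any positive integer with N ≤ (1/(2·√(40γ)))^{d−2}. Then there exist vectors u_1,…,u_N, v_1,…,v_N ∈ ℝ^d such that for all i, j ∈ {1,…,N}: ‖u_i‖ ≤ 1, ‖v_j‖ ≤ 1, ⟨u_i, v_j⟩ ≥ γ whenever i = j, and ⟨u_i, v_j⟩ ≤ −γ whenever i ≠ j. -/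
/-!
A maximal `δ`-separated subset of the unit ball of `ℝⁿ` covers it by `δ`-balls, so comparing
volumes shows that it has at least `(1/δ)ⁿ` points. Given points `yᵢ` of the unit ball of
`ℝ^(d-2)` that are pairwise more than `δ = 2√(40γ)` apart, two extra coordinates make
`uᵢ = (√(2κ) yᵢ, √κ, (γ - κ‖yᵢ‖²)/√κ)` and `vⱼ = (√(2κ) yⱼ, -√κ‖yⱼ‖², √κ)` satisfy
`⟪uᵢ, vⱼ⟫ = γ - κ‖yᵢ - yⱼ‖²`; with `κ = 1/80` this is `γ` on the diagonal and at most
`γ - κδ² = -γ` off it.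
-/

open Metric MeasureTheory Module
open scoped ENNReal NNReal RealInnerProductSpace

namespace Metric

lemma packingNumber_ne_top_of_totallyBounded {X : Type*} [PseudoEMetricSpace X] {A : Set X}
    (hA : TotallyBounded A) {ε : ℝ≥0} (hε : ε ≠ 0) : packingNumber ε A ≠ ⊤ := by
  obtain ⟨C, -, hC_fin, hC⟩ := exists_finite_isCover_of_totallyBounded (ε := ε / 2)
    (by simpa using hε) hA
  refine ne_top_of_le_ne_top (Set.encard_ne_top_iff.mpr hC_fin) ?_
  calc packingNumber ε A = packingNumber (2 * (ε / 2)) A := by rw [mul_div_cancel₀ _ two_ne_zero]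
    _ ≤ externalCoveringNumber (ε / 2) A := packingNumber_two_mul_le_externalCoveringNumber _ _
    _ ≤ C.encard := hC.externalCoveringNumber_le_encard

end Metric

section Packing

variable {E : Type*} [NormedAddCommGroup E] [NormedSpace ℝ E] [FiniteDimensional ℝ E]

theorem pow_le_card_mul_pow_of_isCover {x : E} {r : ℝ} (hr : 0 ≤ r) {ε : ℝ≥0} {C : Finset E}
    (hC : IsCover ε (closedBall x r) (C : Set E)) :
    r ^ finrank ℝ E ≤ C.card * (ε : ℝ) ^ finrank ℝ E := by
  borelize E
  set μ : Measure E := Measure.addHaar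
  have hcover : μ (closedBall x r) ≤ ∑ y ∈ C, μ (closedBall y ε) :=
    (measure_mono (isCover_iff_subset_iUnion_closedBall.mp hC)).trans
      (measure_biUnion_finset_le C _)
  simp only [Measure.addHaar_closedBall' μ _ hr, Measure.addHaar_closedBall' μ _ ε.coe_nonneg,
    Finset.sum_const, nsmul_eq_mul, ← mul_assoc] at hcover
  rwa [ENNReal.mul_le_mul_iff_left (measure_closedBall_pos μ 0 one_pos).ne'
    measure_closedBall_lt_top.ne, ← ENNReal.ofReal_natCast, ← ENNReal.ofReal_mul (by positivity),
    ENNReal.ofReal_le_ofReal_iff (by positivity)] at hcover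

theorem exists_fin_pairwise_lt_dist_closedBall (x : E) {r δ : ℝ} (hr : 0 ≤ r) (hδ : 0 < δ)
    {N : ℕ} (hN : (N : ℝ) ≤ (r / δ) ^ finrank ℝ E) :
    ∃ y : Fin N → E, (∀ i, y i ∈ closedBall x r) ∧ Pairwise fun i j ↦ δ < dist (y i) (y j) := by
  set ε : ℝ≥0 := δ.toNNReal
  have hε : (ε : ℝ) = δ := Real.coe_toNNReal _ hδ.le
  have h_top : packingNumber ε (closedBall x r) ≠ ⊤ :=
    packingNumber_ne_top_of_totallyBounded (isCompact_closedBall x r).totallyBounded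
      (by simpa [ε] using hδ)
  set C := maximalSeparatedSet ε (closedBall x r)
  have hC_fin : C.Finite := Set.encard_ne_top_iff.mp (by rwa [encard_maximalSeparatedSet h_top])
  have hcard : N ≤ hC_fin.toFinset.card := by
    have := pow_le_card_mul_pow_of_isCover hr (C := hC_fin.toFinset)
      (by simpa using isCover_maximalSeparatedSet h_top)
    rw [hε] at this
    rw [div_pow, le_div_iff₀ (by positivity)] at hN
    exact_mod_cast le_of_mul_le_mul_right (hN.trans this) (by positivity)
  obtain ⟨f⟩ : Nonempty (Fin N ↪ hC_fin.toFinset) :=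
    Function.Embedding.nonempty_of_card_le (by simpa using hcard)
  have hf_mem (i : Fin N) : (f i : E) ∈ C := hC_fin.mem_toFinset.mp (f i).2
  refine ⟨fun i ↦ f i, fun i ↦ maximalSeparatedSet_subset (hf_mem i), fun i j hij ↦ ?_⟩
  have : (ε : ℝ≥0∞) < edist (f i : E) (f j) := isSeparated_maximalSeparatedSet (hf_mem i)
    (hf_mem j) (Subtype.coe_injective.ne (f.injective.ne hij))
  rwa [edist_nndist, ENNReal.coe_lt_coe, ← NNReal.coe_lt_coe, coe_nndist, hε] at this

end Packing

namespace EuclideanSpace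

variable {𝕜 : Type*} [RCLike 𝕜] {m n : ℕ}

noncomputable def append (x : EuclideanSpace 𝕜 (Fin m)) (y : EuclideanSpace 𝕜 (Fin n)) :
    EuclideanSpace 𝕜 (Fin (m + n)) :=
  WithLp.toLp 2 (Fin.append x.ofLp y.ofLp)

theorem inner_append (x x' : EuclideanSpace 𝕜 (Fin m)) (y y' : EuclideanSpace 𝕜 (Fin n)) :
    inner 𝕜 (append x y) (append x' y') = inner 𝕜 x x' + inner 𝕜 y y' := by
  simp [append, PiLp.inner_apply, Fin.sum_univ_add]

theorem norm_append_sq (x : EuclideanSpace 𝕜 (Fin m)) (y : EuclideanSpace 𝕜 (Fin n)) :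
    ‖append x y‖ ^ 2 = ‖x‖ ^ 2 + ‖y‖ ^ 2 := by
  simp [append, norm_sq_eq, Fin.sum_univ_add]

end EuclideanSpace

open EuclideanSpace in
theorem exists_inner_eq_sub_mul_norm_sub_sq {ι : Type*} {m : ℕ}
    (y : ι → EuclideanSpace ℝ (Fin m)) (hy : ∀ i, ‖y i‖ ≤ 1) {κ γ : ℝ} (hκ : 0 < κ)
    (hκ_le : κ ≤ 1 / 4) (hγ : 0 ≤ γ) (hγ_le : γ ≤ κ) :
    ∃ u v : ι → EuclideanSpace ℝ (Fin (m + 2)), (∀ i, ‖u i‖ ≤ 1) ∧ (∀ j, ‖v j‖ ≤ 1) ∧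
      ∀ i j, ⟪u i, v j⟫ = γ - κ * ‖y i - y j‖ ^ 2 := by
  set s := √κ
  have hs : 0 < s := Real.sqrt_pos.mpr hκ
  have hs_sq : s ^ 2 = κ := Real.sq_sqrt hκ.le
  have hq (i : ι) : 0 ≤ ‖y i‖ ^ 2 ∧ ‖y i‖ ^ 2 ≤ 1 :=
    ⟨by positivity, pow_le_one₀ (norm_nonneg _) (hy i)⟩
  have hscale (x : EuclideanSpace ℝ (Fin m)) : ‖√(2 * κ) • x‖ ^ 2 = 2 * κ * ‖x‖ ^ 2 := by
    rw [norm_smul, mul_pow, Real.norm_eq_abs, sq_abs, Real.sq_sqrt (by positivity)]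
  have hpair (a b : ℝ) : ‖!₂[a, b]‖ ^ 2 = a ^ 2 + b ^ 2 := by simp [norm_sq_eq]
  refine ⟨fun i ↦ append (√(2 * κ) • y i) !₂[s, (γ - κ * ‖y i‖ ^ 2) / s],
    fun j ↦ append (√(2 * κ) • y j) !₂[-(s * ‖y j‖ ^ 2), s], fun i ↦ ?_, fun j ↦ ?_, fun i j ↦ ?_⟩
  · obtain ⟨hq₀, hq₁⟩ := hq i
    have : ((γ - κ * ‖y i‖ ^ 2) / s) ^ 2 ≤ κ := by
      rw [div_pow, hs_sq, div_le_iff₀ hκ, ← sq]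
      exact sq_le_sq' (by nlinarith) (by nlinarith)
    rw [← sq_le_one_iff₀ (norm_nonneg _), norm_append_sq, hscale, hpair, hs_sq]
    nlinarith
  · obtain ⟨hq₀, hq₁⟩ := hq j
    rw [← sq_le_one_iff₀ (norm_nonneg _), norm_append_sq, hscale, hpair, neg_sq, mul_pow, hs_sq]
    nlinarith
  · have hpair_inner (a b a' b' : ℝ) : ⟪!₂[a, b], !₂[a', b']⟫ = a * a' + b * b' := by
      simp [PiLp.inner_apply, mul_comm]
    rw [inner_append, real_inner_smul_left, real_inner_smul_right, ← mul_assoc,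
      Real.mul_self_sqrt (by positivity), hpair_inner, norm_sub_sq_real]
    field_simp
    rw [hs_sq]
    ring

theorem embedding_lemma_general (γ : ℝ) (hγ0 : 0 < γ) (hγ1 : γ < 1 / 160)
    (d : ℕ) (hd : 2 ≤ d) (N : ℕ)
    (hNle : (N : ℝ) ≤ (1 / (2 * Real.sqrt (40 * γ))) ^ (d - 2)) :
    ∃ u v : Fin N → EuclideanSpace ℝ (Fin d),
      (∀ i, ‖u i‖ ≤ 1) ∧ (∀ j, ‖v j‖ ≤ 1) ∧
      (∀ i, γ ≤ ⟪u i, v i⟫) ∧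
      (∀ i j, i ≠ j → ⟪u i, v j⟫ ≤ -γ) := by
  obtain ⟨m, rfl⟩ : ∃ m, d = m + 2 := ⟨d - 2, by omega⟩
  set δ := 2 * √(40 * γ)
  have hδ : 0 < δ := by positivity
  have hδ_sq : δ ^ 2 = 160 * γ := by
    rw [mul_pow, Real.sq_sqrt (by positivity)]
    ring
  obtain ⟨y, hy, hy_sep⟩ := exists_fin_pairwise_lt_dist_closedBall (0 : EuclideanSpace ℝ (Fin m))
    zero_le_one hδ (by simpa using hNle)
  obtain ⟨u, v, hu, hv, huv⟩ := exists_inner_eq_sub_mul_norm_sub_sq y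
    (fun i ↦ mem_closedBall_zero_iff.mp (hy i)) (κ := 1 / 80) (by norm_num) (by norm_num)
    hγ0.le (by linarith)
  refine ⟨u, v, hu, hv, fun i ↦ by simp [huv], fun i j hij ↦ ?_⟩
  have hdist : δ < ‖y i - y j‖ := by simpa [dist_eq_norm] using hy_sep hij
  rw [huv]
  nlinarith

/-- Embedding lemma: for `γ ∈ (0, 1/160)`, `d ≥ 2` and any positive integer
`N ≤ (1/(2√(40γ)))^{d−2}`, there exist vectors `u_1,…,u_N, v_1,…,v_N` in `ℝ^d` of norm at
most `1` with `⟪u_i, v_i⟫ ≥ γ` and `⟪u_i, v_j⟫ ≤ −γ` for `i ≠ j`. -/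
theorem embedding_lemma (γ : ℝ) (hγ0 : 0 < γ) (hγ1 : γ < 1 / 160)
    (d : ℕ) (hd : 2 ≤ d) (N : ℕ) (hN : 0 < N)
    (hNle : (N : ℝ) ≤ (1 / (2 * Real.sqrt (40 * γ))) ^ (d - 2)) :
    ∃ u v : Fin N → EuclideanSpace ℝ (Fin d),
      (∀ i, ‖u i‖ ≤ 1) ∧ (∀ j, ‖v j‖ ≤ 1) ∧
      (∀ i, γ ≤ ⟪u i, v i⟫) ∧
      (∀ i j, i ≠ j → ⟪u i, v j⟫ ≤ -γ) :=
  embedding_lemma_general γ hγ0 hγ1 d hd N hNle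
end
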